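/- The face F_{T₁} := {f ∈ P : the coefficients of x⁴ and of x²z² in f are zero} of the cone P is not exposed: there is no linear functional L : H₄ → ℝ with L(h) ≥ 0 for all h ∈ P and F_{T₁} = {h ∈ P : L(h) = 0}. -/

import Mathlib

open MvPolynomial

noncomputable section

/-- The space of ternary (3-variable) real polynomials. `H d` corresponds to the
homogeneous polynomials of degree `d` via the predicate `IsHomogeneous`. -/
abbrev MvP : Type := MvPolynomial (Fin 3) ℝ

/-- The cone `P` of nonnegative ternary quartics. -/
def Pcone : Set MvP :=
  {f | f.IsHomogeneous 4 ∧ ∀ a : Fin 3 → ℝ, 0 ≤ eval a f}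

/-- `F` is a face of the cone `P`. -/
def IsFace (F : Set MvP) : Prop :=
  F ⊆ Pcone ∧
  (∀ a ∈ F, ∀ b ∈ F, a + b ∈ F) ∧
  (∀ c : ℝ, 0 ≤ c → ∀ a ∈ F, c • a ∈ F) ∧
  (∀ a ∈ Pcone, ∀ b ∈ Pcone, a + b ∈ F → a ∈ F ∧ b ∈ F)

/-- `J_F = {q ∈ H₂ : q² ∈ F}`. -/
def Jset (F : Set MvP) : Set MvP :=
  {q | q.IsHomogeneous 2 ∧ q ^ 2 ∈ F}

/-- `F` is an exposed face of `P`. -/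
def ExposedFace (F : Set MvP) : Prop :=
  ∃ L : MvP →ₗ[ℝ] ℝ, (∀ h ∈ Pcone, 0 ≤ L h) ∧ F = {h ∈ Pcone | L h = 0}

/-- The face `F_{T₁}`: quartics in `P` whose coefficients of `x⁴` and `x²z²` vanish. -/
def FT1 : Set MvP :=
  {f ∈ Pcone | coeff (Finsupp.single (0 : Fin 3) 4) f = 0 ∧
    coeff (Finsupp.single (0 : Fin 3) 2 + Finsupp.single (2 : Fin 3) 2) f = 0}

/-!
If `L ≥ 0` on `P` kills `z⁴ = (z²)²`, then `t ↦ L((t x² + z²)²) = t² L(x⁴) + 2t L(x²z²)` is a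
nonnegative quadratic without constant term, so its discriminant forces `L(x²z²) = 0`. Hence the
square `x²z² = (xz)²` lies in the zero set of `L`, although its `x²z²` coefficient is `1`.
-/

lemma sq_mem_Pcone {q : MvP} (hq : q.IsHomogeneous 2) : q ^ 2 ∈ Pcone :=
  ⟨hq.pow 2, fun a => by rw [map_pow]; positivity⟩

/-- Cauchy–Schwarz for the bilinear form `(p, q) ↦ L (p * q)` on quadratics. -/
lemma map_mul_eq_zero_of_map_sq_eq_zero {L : MvP →ₗ[ℝ] ℝ} (hL : ∀ h ∈ Pcone, 0 ≤ L h)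
    {p q : MvP} (hp : p.IsHomogeneous 2) (hq : q.IsHomogeneous 2) (hq0 : L (q ^ 2) = 0) :
    L (p * q) = 0 := by
  have hquad : ∀ t : ℝ, 0 ≤ L (p ^ 2) * (t * t) + 2 * L (p * q) * t + L (q ^ 2) := by
    intro t
    have hexpand : (C t * p + q) ^ 2 = (t * t) • p ^ 2 + (2 * t) • (p * q) + q ^ 2 := by
      simp only [smul_eq_C_mul, map_mul, map_ofNat]
      ring
    have := hL _ (sq_mem_Pcone ((hp.C_mul t).add hq))
    rw [hexpand, map_add, map_add, map_smul, map_smul, smul_eq_mul, smul_eq_mul] at this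
    linarith
  have hdisc := discrim_le_zero hquad
  rw [discrim, hq0, mul_zero, sub_zero] at hdisc
  nlinarith [sq_nonneg (L (p * q))]

lemma X_two_sq_sq_mem_FT1 : (X 2 ^ 2) ^ 2 ∈ FT1 := by
  refine ⟨sq_mem_Pcone (isHomogeneous_X_pow 2 2), ?_, ?_⟩ <;>
  · rw [← pow_mul, coeff_X_pow, if_neg]
    intro h
    have := DFunLike.congr_fun h 2
    simp at this

lemma coeff_X_zero_sq_mul_X_two_sq :
    coeff (Finsupp.single 0 2 + Finsupp.single 2 2) (X 0 ^ 2 * X 2 ^ 2 : MvP) = 1 := by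
  rw [X_pow_eq_monomial, X_pow_eq_monomial, monomial_mul, one_mul, coeff_monomial, if_pos rfl]

theorem stmt_18 : ¬ ExposedFace FT1 := by
  rintro ⟨L, hL, hF⟩
  have hz : L ((X 2 ^ 2) ^ 2) = 0 := (hF ▸ X_two_sq_sq_mem_FT1).2
  have hxz : L (X 0 ^ 2 * X 2 ^ 2) = 0 :=
    map_mul_eq_zero_of_map_sq_eq_zero hL (isHomogeneous_X_pow 0 2) (isHomogeneous_X_pow 2 2) hz
  have hxz_mem : X 0 ^ 2 * X 2 ^ 2 ∈ Pcone := by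
    rw [← mul_pow]
    exact sq_mem_Pcone ((isHomogeneous_X ℝ 0).mul (isHomogeneous_X ℝ 2))
  have hxz_FT1 : X 0 ^ 2 * X 2 ^ 2 ∈ FT1 := hF ▸ ⟨hxz_mem, hxz⟩
  exact one_ne_zero (coeff_X_zero_sq_mul_X_two_sq ▸ hxz_FT1.2.2)

end
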